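/- Consider the map f(X) = A + M(B + X^{-1})^{-1} Mᵀ, where A is positive definite, B is positive semidefinite, and M is a square matrix. For positive definite X, Y, δ_∞(f(X), f(Y)) ≤ (α/(λ_min(A) + α)) δ_∞(X, Y), where α = max{λ_max(MXMᵀ), λ_max(MYMᵀ)}. -/

import Mathlib

open Matrix MeasureTheory ProbabilityTheory
open scoped Classical RealInnerProductSpace

/-- Operator (spectral) norm of a real matrix. -/
noncomputable def opNorm {m n : Type*} [Fintype m] [Fintype n] [DecidableEq n]
    (A : Matrix m n ℝ) : ℝ :=
  ‖LinearMap.toContinuousLinearMap (Matrix.toEuclideanLin A)‖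

/-- Frobenius norm of a real matrix. -/
noncomputable def frob {m n : Type*} [Fintype m] [Fintype n] (A : Matrix m n ℝ) : ℝ :=
  Real.sqrt (∑ i, ∑ j, (A i j) ^ 2)

/-- Positive semidefinite square root (junk value `0` off the PSD matrices). -/
noncomputable def sqrtPD {n : Type*} [Fintype n] [DecidableEq n]
    (A : Matrix n n ℝ) : Matrix n n ℝ :=
  if h : A.PosSemidef then
    (h.1.eigenvectorUnitary : Matrix n n ℝ) * Matrix.diagonal (Real.sqrt ∘ h.1.eigenvalues) *
      (star (h.1.eigenvectorUnitary : Matrix n n ℝ))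
  else 0

/-- Matrix logarithm of a hermitian matrix via the spectral theorem
(junk value `0` off the hermitian matrices). -/
noncomputable def mlog {n : Type*} [Fintype n] [DecidableEq n]
    (A : Matrix n n ℝ) : Matrix n n ℝ :=
  if h : A.IsHermitian then
    (h.eigenvectorUnitary : Matrix n n ℝ) * Matrix.diagonal (Real.log ∘ h.eigenvalues) *
      (star (h.eigenvectorUnitary : Matrix n n ℝ))
  else 0

/-- Thompson (invariant) metric `δ∞(A,B) = ‖log (A^{-1/2} B A^{-1/2})‖`. -/
noncomputable def thompson {n : Type*} [Fintype n] [DecidableEq n]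
    (A B : Matrix n n ℝ) : ℝ :=
  opNorm (mlog ((sqrtPD A)⁻¹ * B * (sqrtPD A)⁻¹))

/-- Largest (real) eigenvalue. -/
noncomputable def lamMax {n : Type*} [Fintype n] [DecidableEq n] (A : Matrix n n ℝ) : ℝ :=
  sSup (spectrum ℝ A)

/-- Smallest (real) eigenvalue. -/
noncomputable def lamMin {n : Type*} [Fintype n] [DecidableEq n] (A : Matrix n n ℝ) : ℝ :=
  sInf (spectrum ℝ A)

/-- Solution `P = Σ_{k≥0} (Lᵀ)^k M L^k` of the discrete Lyapunov equation `P = Lᵀ P L + M`. -/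
noncomputable def dlyap {n : Type*} [Fintype n] [DecidableEq n]
    (L M : Matrix n n ℝ) : Matrix n n ℝ :=
  ∑' k : ℕ, (L ^ k)ᵀ * M * (L ^ k)

/-- `K` stabilizes `(A,B)`: the closed loop matrix `A + BK` has spectral radius `< 1`. -/
def Stabilizes {n d : Type*} [Fintype n] [DecidableEq n] [Fintype d]
    (A : Matrix n n ℝ) (B : Matrix n d ℝ) (K : Matrix d n ℝ) : Prop :=
  ∀ z ∈ spectrum ℂ ((A + B * K).map ((↑) : ℝ → ℂ)), ‖z‖ < 1

/-!
For positive definite `P, Q` and `s ≥ 0`, `δ∞(P, Q) ≤ s` holds iff `Q ≤ eˢ P` and `P ≤ eˢ Q` in the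
Loewner order. Write `f(X) = A + G(X)` with `G(X) = M (B + X⁻¹)⁻¹ Mᵀ` and `r = δ∞(X, Y)`. Since
inversion reverses the order and `B ≥ e⁻ʳ B`, `Y ≤ eʳ X` gives `G(Y) ≤ eʳ G(X)`; on the other hand
`G(Y) ≤ M Y Mᵀ ≤ α`. Split `G(Y)` between these two bounds with weights `e^{g-r}` and
`1 - e^{g-r}`, where `g = α r / (λ_min(A) + α)`, and absorb the constant `(1 - e^{g-r}) α` into
`(e^g - 1) A ≥ (e^g - 1) λ_min(A)`: this gives `f(Y) ≤ e^g f(X)`. The choice of `g` makes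
`λ_min(A) g = α (r - g)`, so the needed scalar inequality follows from `1 + x ≤ eˣ`.
-/

open scoped MatrixOrder Matrix.Norms.L2Operator ComplexOrder
open Real

theorem IsUnit.star_right_conjugate_le_conjugate_iff {R : Type*} [Ring R] [PartialOrder R]
    [StarRing R] [StarOrderedRing R] {u a b : R} (hu : IsUnit u) :
    u * a * star u ≤ u * b * star u ↔ a ≤ b := by
  rw [← sub_nonneg, ← sub_mul, ← mul_sub, hu.star_right_conjugate_nonneg_iff, sub_nonneg]

theorem Real.abs_log_le_iff {x s : ℝ} (hx : 0 < x) :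
    |log x| ≤ s ↔ exp (-s) ≤ x ∧ x ≤ exp s := by
  rw [abs_le, le_log_iff_exp_le hx, log_le_iff_le_exp hx]

theorem CFC.norm_log_le_iff {A : Type*} [NormedRing A] [StarRing A] [NormedAlgebra ℝ A]
    [PartialOrder A] [StarOrderedRing A] [IsometricContinuousFunctionalCalculus ℝ A IsSelfAdjoint]
    [NonnegSpectrumClass ℝ A] {S : A} (hS : IsStrictlyPositive S) {s : ℝ} (hs : 0 ≤ s) :
    ‖CFC.log S‖ ≤ s ↔ algebraMap ℝ A (exp (-s)) ≤ S ∧ S ≤ algebraMap ℝ A (exp s) := by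
  rw [CFC.log,
    norm_cfc_le_iff _ _ hs (Real.continuousOn_log.mono fun x hx => (hS.spectrum_pos hx).ne'),
    algebraMap_le_iff_le_spectrum, le_algebraMap_iff_spectrum_le, ← forall₂_and]
  exact forall₂_congr fun x hx => Real.abs_log_le_iff (hS.spectrum_pos hx)

theorem Real.one_sub_exp_mul_le {a α : ℝ} (ha : 0 < a) (hα : 0 ≤ α) (r : ℝ) :
    (1 - exp (α / (a + α) * r - r)) * α ≤ (exp (α / (a + α) * r) - 1) * a := by
  set g := α / (a + α) * r
  calc (1 - exp (g - r)) * α ≤ (r - g) * α :=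
        mul_le_mul_of_nonneg_right (by linarith [add_one_le_exp (g - r)]) hα
    _ = g * a := by simp only [g]; field_simp; ring
    _ ≤ (exp g - 1) * a := mul_le_mul_of_nonneg_right (by linarith [add_one_le_exp g]) ha.le

theorem add_le_exp_smul_add {E : Type*} [AddCommGroup E] [PartialOrder E] [IsOrderedAddMonoid E]
    [Module ℝ E] [PosSMulMono ℝ E] {u A G H : E} {a α r : ℝ} (hu : 0 ≤ u) (ha : 0 < a)
    (hα : 0 ≤ α) (hr : 0 ≤ r) (hA : a • u ≤ A) (hHG : H ≤ exp r • G) (hHu : H ≤ α • u) :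
    A + H ≤ exp (α / (a + α) * r) • (A + G) := by
  set g := α / (a + α) * r
  set l := exp (g - r)
  have hgr : g ≤ r := mul_le_of_le_one_left hr ((div_le_one (by positivity)).2 (by linarith))
  have hl : l ≤ 1 := exp_le_one_iff.2 (by linarith)
  have hlr : l * exp r = exp g := by rw [← exp_add, sub_add_cancel]
  have hg : 0 ≤ exp g - 1 :=
    sub_nonneg.2 (one_le_exp (mul_nonneg (div_nonneg hα (by linarith)) hr))
  calc A + H = A + (l • H + (1 - l) • H) := by rw [← add_smul, add_sub_cancel, one_smul]
    _ ≤ A + (l • exp r • G + (1 - l) • α • u) := by gcongr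
    _ = A + ((1 - l) * α) • u + exp g • G := by rw [smul_smul, hlr, smul_smul]; abel
    _ ≤ A + ((exp g - 1) * a) • u + exp g • G := by
        gcongr A + ?_ • u + _
        exact Real.one_sub_exp_mul_le ha hα r
    _ ≤ A + (exp g - 1) • A + exp g • G := by
        rw [mul_smul]
        gcongr
    _ = exp g • (A + G) := by module

namespace Matrix

theorem star_eq_transpose {n α : Type*} [Star α] [TrivialStar α] (M : Matrix n n α) :
    star M = Mᵀ := by
  rw [star_eq_conjTranspose, conjTranspose_eq_transpose_of_trivial]

theorem PosSemidef.mul_mul_transpose_same {n : Type*} [Fintype n] {P : Matrix n n ℝ}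
    (hP : P.PosSemidef) (M : Matrix n n ℝ) : (M * P * Mᵀ).PosSemidef := by
  simpa [conjTranspose_eq_transpose_of_trivial] using hP.mul_mul_conjTranspose_same M

variable {n : Type*} [Fintype n] [DecidableEq n]

theorem inv_smul_of_ne_zero {K : Type*} [Field K] {P : Matrix n n K} {c : K} (hc : c ≠ 0)
    (hP : IsUnit P.det) : (c • P)⁻¹ = c⁻¹ • P⁻¹ :=
  inv_eq_left_inv (by simp [hc, smul_smul, nonsing_inv_mul _ hP])

theorem PosDef.inv_le_inv_of_le {𝕜 : Type*} [RCLike 𝕜] {P Q : Matrix n n 𝕜} (hP : P.PosDef)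
    (hPQ : P ≤ Q) : Q⁻¹ ≤ P⁻¹ := by
  have hQ : Q.PosDef := by simpa using hP.add_posSemidef (le_iff.1 hPQ)
  have hPd : IsUnit P.det := hP.det_pos.ne'.isUnit
  have hQd : IsUnit Q.det := hQ.det_pos.ne'.isUnit
  set D := P⁻¹ - Q⁻¹
  have hD : star D = D := (hP.inv.isHermitian.sub hQ.inv.isHermitian).eq
  have key : D = D * P * star D + Q⁻¹ * (Q - P) * star Q⁻¹ := by
    rw [hD, hQ.inv.isHermitian.isSelfAdjoint.star_eq]
    simp only [D, sub_mul, mul_sub, nonsing_inv_mul _ hPd, nonsing_inv_mul _ hQd,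
      mul_nonsing_inv_cancel_right _ _ hPd, one_mul]
    abel
  rw [← sub_nonneg, show P⁻¹ - Q⁻¹ = D from rfl, key]
  exact add_nonneg (star_right_conjugate_nonneg hP.posSemidef.nonneg D)
    (star_right_conjugate_nonneg (sub_nonneg.2 hPQ) _)

theorem inv_add_inv_le {B Y : Matrix n n ℝ} (hB : 0 ≤ B) (hY : Y.PosDef) : (B + Y⁻¹)⁻¹ ≤ Y := by
  simpa [nonsing_inv_nonsing_inv _ hY.det_pos.ne'.isUnit] using
    hY.inv.inv_le_inv_of_le (le_add_of_nonneg_left hB)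

theorem inv_add_inv_le_smul {B X Y : Matrix n n ℝ} (hB : 0 ≤ B) (hX : X.PosDef) (hY : Y.PosDef)
    {t : ℝ} (ht : 1 ≤ t) (hYX : Y ≤ t • X) : (B + Y⁻¹)⁻¹ ≤ t • (B + X⁻¹)⁻¹ := by
  have ht0 : 0 < t := zero_lt_one.trans_le ht
  have hBX : (B + X⁻¹).PosDef := hX.inv.posSemidef_add hB.posSemidef
  have hXY : t⁻¹ • X⁻¹ ≤ Y⁻¹ := by
    simpa [inv_smul_of_ne_zero ht0.ne' hX.det_pos.ne'.isUnit] using hY.inv_le_inv_of_le hYX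
  have hBB : t⁻¹ • B ≤ B := smul_le_of_le_one_left hB (inv_le_one_of_one_le₀ ht)
  have h : (B + Y⁻¹)⁻¹ ≤ (t⁻¹ • (B + X⁻¹))⁻¹ :=
    (hBX.smul (inv_pos.2 ht0)).inv_le_inv_of_le (by rw [smul_add]; exact add_le_add hBB hXY)
  rwa [inv_smul_of_ne_zero (inv_ne_zero ht0.ne') hBX.det_pos.ne'.isUnit, inv_inv] at h

theorem sqrtPD_eq_cfcSqrt {P : Matrix n n ℝ} (hP : P.PosSemidef) : sqrtPD P = CFC.sqrt P := by
  rw [sqrtPD, dif_pos hP, CFC.sqrt_eq_cfc, cfc_nnreal_eq_real _ P, hP.1.cfc_eq]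
  simp [IsHermitian.cfc, Function.comp_def, hP.eigenvalues_nonneg]

theorem mlog_eq_cfcLog {S : Matrix n n ℝ} (hS : S.IsHermitian) : mlog S = CFC.log S := by
  rw [mlog, dif_pos hS, CFC.log, hS.cfc_eq]
  simp [IsHermitian.cfc, Function.comp_def]

theorem IsHermitian.spectrum_real_nonempty {𝕜 : Type*} [RCLike 𝕜] [Nonempty n]
    {A : Matrix n n 𝕜} (hA : A.IsHermitian) : (spectrum ℝ A).Nonempty := by
  rw [hA.spectrum_real_eq_range_eigenvalues]
  exact Set.range_nonempty _

end Matrix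

open Matrix

section

variable {n : Type*} [Fintype n] [DecidableEq n]

theorem thompson_nonneg (P Q : Matrix n n ℝ) : 0 ≤ thompson P Q := norm_nonneg _

theorem thompson_of_isEmpty [IsEmpty n] (P Q : Matrix n n ℝ) : thompson P Q = 0 := by
  simp [thompson, opNorm, Subsingleton.elim (mlog _) 0]

theorem thompson_le_iff {P Q : Matrix n n ℝ} (hP : P.PosDef) (hQ : Q.PosDef) {s : ℝ}
    (hs : 0 ≤ s) : thompson P Q ≤ s ↔ Q ≤ exp s • P ∧ P ≤ exp s • Q := by
  set W := CFC.sqrt P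
  have hWsa : star W = W := (CFC.sqrt_nonneg P).isSelfAdjoint
  have hWu : IsUnit W := (CFC.isUnit_sqrt_iff P).2 hP.isUnit
  have hWd : IsUnit W.det := (isUnit_iff_isUnit_det W).1 hWu
  set S := W⁻¹ * Q * W⁻¹
  have hS : IsStrictlyPositive S := by
    have := (isUnit_nonsing_inv_iff.2 hWu).isStrictlyPositive_star_right_conjugate_iff.2
      hQ.isStrictlyPositive
    rwa [star_eq_conjTranspose, conjTranspose_nonsing_inv, ← star_eq_conjTranspose, hWsa] at this
  have hWS : W * S * star W = Q := by
    rw [hWsa, ← mul_assoc, ← mul_assoc, mul_nonsing_inv _ hWd, one_mul, mul_assoc,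
      nonsing_inv_mul _ hWd, mul_one]
  have hW1 (c : ℝ) : W * algebraMap ℝ _ c * star W = c • P := by
    rw [Algebra.algebraMap_eq_smul_one, hWsa, mul_smul_comm, mul_one, smul_mul_assoc,
      CFC.sqrt_mul_sqrt_self P]
  calc thompson P Q ≤ s ↔ ‖CFC.log S‖ ≤ s := by
        rw [thompson, sqrtPD_eq_cfcSqrt hP.posSemidef, mlog_eq_cfcLog hS.isSelfAdjoint]
        rfl
    _ ↔ algebraMap ℝ _ (exp (-s)) ≤ S ∧ S ≤ algebraMap ℝ _ (exp s) := CFC.norm_log_le_iff hS hs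
    _ ↔ exp (-s) • P ≤ Q ∧ Q ≤ exp s • P := by
        rw [← hWu.star_right_conjugate_le_conjugate_iff (a := algebraMap ℝ _ _),
          ← hWu.star_right_conjugate_le_conjugate_iff (a := S), hWS, hW1, hW1]
    _ ↔ Q ≤ exp s • P ∧ P ≤ exp s • Q := by
        rw [and_comm, Real.exp_neg, inv_smul_le_iff_of_pos (exp_pos s)]

theorem lamMin_smul_one_le {A : Matrix n n ℝ} (hA : A.IsHermitian) : lamMin A • 1 ≤ A := by
  rw [← Algebra.algebraMap_eq_smul_one, algebraMap_le_iff_le_spectrum hA.isSelfAdjoint]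
  exact fun x hx => csInf_le (finite_spectrum A).bddBelow hx

theorem le_lamMax_smul_one {A : Matrix n n ℝ} (hA : A.IsHermitian) : A ≤ lamMax A • 1 := by
  rw [← Algebra.algebraMap_eq_smul_one, le_algebraMap_iff_spectrum_le hA.isSelfAdjoint]
  exact fun x hx => le_csSup (finite_spectrum A).bddAbove hx

theorem lamMin_pos [Nonempty n] {A : Matrix n n ℝ} (hA : A.PosDef) : 0 < lamMin A :=
  hA.isStrictlyPositive.spectrum_pos <|
    hA.isHermitian.spectrum_real_nonempty.csInf_mem (finite_spectrum A)

theorem lamMax_nonneg [Nonempty n] {A : Matrix n n ℝ} (hA : A.PosSemidef) : 0 ≤ lamMax A :=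
  spectrum_nonneg_of_nonneg hA.nonneg <|
    hA.isHermitian.spectrum_real_nonempty.csSup_mem (finite_spectrum A)

noncomputable def riccatiMap (A B M X : Matrix n n ℝ) : Matrix n n ℝ := A + M * (B + X⁻¹)⁻¹ * Mᵀ

theorem riccatiMap_posDef {A B M X : Matrix n n ℝ} (hA : A.PosDef) (hB : B.PosSemidef)
    (hX : X.PosDef) : (riccatiMap A B M X).PosDef :=
  hA.add_posSemidef ((hX.inv.posSemidef_add hB).inv.posSemidef.mul_mul_transpose_same M)

theorem riccatiMap_le_exp_smul {A B M X Y : Matrix n n ℝ} {a α r : ℝ} (ha : 0 < a)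
    (hα : 0 ≤ α) (hr : 0 ≤ r) (hA : a • 1 ≤ A) (hB : 0 ≤ B) (hX : X.PosDef) (hY : Y.PosDef)
    (hMY : M * Y * Mᵀ ≤ α • 1) (hYX : Y ≤ exp r • X) :
    riccatiMap A B M Y ≤ exp (α / (a + α) * r) • riccatiMap A B M X := by
  have hGY : M * (B + Y⁻¹)⁻¹ * Mᵀ ≤ exp r • (M * (B + X⁻¹)⁻¹ * Mᵀ) := by
    simpa [star_eq_transpose, mul_smul_comm, smul_mul_assoc] using
      star_right_conjugate_le_conjugate (inv_add_inv_le_smul hB hX hY (one_le_exp hr) hYX) M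
  have hGα : M * (B + Y⁻¹)⁻¹ * Mᵀ ≤ α • 1 := by
    refine le_trans ?_ hMY
    simpa [star_eq_transpose] using star_right_conjugate_le_conjugate (inv_add_inv_le hB hY) M
  exact add_le_exp_smul_add zero_le_one ha hα hr hA hGY hGα

end

/-- Thompson-metric contraction of the Riccati-type map `X ↦ A + M (B + X⁻¹)⁻¹ Mᵀ`. -/
theorem thompson_riccati_contraction {n : ℕ} (A B M X Y : Matrix (Fin n) (Fin n) ℝ)
    (hA : A.PosDef) (hB : B.PosSemidef) (hX : X.PosDef) (hY : Y.PosDef) :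
    thompson (A + M * (B + X⁻¹)⁻¹ * Mᵀ) (A + M * (B + Y⁻¹)⁻¹ * Mᵀ) ≤
      (max (lamMax (M * X * Mᵀ)) (lamMax (M * Y * Mᵀ))) /
        (lamMin A + max (lamMax (M * X * Mᵀ)) (lamMax (M * Y * Mᵀ))) * thompson X Y := by
  rcases isEmpty_or_nonempty (Fin n) with hn | hn
  · simp [thompson_of_isEmpty]
  set α := max (lamMax (M * X * Mᵀ)) (lamMax (M * Y * Mᵀ))
  have hMX := hX.posSemidef.mul_mul_transpose_same M
  have hMY := hY.posSemidef.mul_mul_transpose_same M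
  have hαX : M * X * Mᵀ ≤ α • 1 := (le_lamMax_smul_one hMX.isHermitian).trans
    (smul_le_smul_of_nonneg_right (le_max_left _ _) zero_le_one)
  have hαY : M * Y * Mᵀ ≤ α • 1 := (le_lamMax_smul_one hMY.isHermitian).trans
    (smul_le_smul_of_nonneg_right (le_max_right _ _) zero_le_one)
  have ha := lamMin_pos hA
  have hα : 0 ≤ α := (lamMax_nonneg hMX).trans (le_max_left _ _)
  have hr := thompson_nonneg X Y
  obtain ⟨hYX, hXY⟩ := (thompson_le_iff hX hY hr).1 le_rfl
  have hAa := lamMin_smul_one_le hA.isHermitian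
  refine (thompson_le_iff (riccatiMap_posDef hA hB hX) (riccatiMap_posDef hA hB hY)
    (mul_nonneg (div_nonneg hα (by linarith)) hr)).2 ⟨?_, ?_⟩
  · exact riccatiMap_le_exp_smul ha hα hr hAa hB.nonneg hX hY hαY hYX
  · exact riccatiMap_le_exp_smul ha hα hr hAa hB.nonneg hY hX hαX hXY
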